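/- Let X be a quasicontinuous space. Then L*_X-convergence is topological and coincides with convergence in the Lawson topology: a net (x_i) converges to x in λ(X) if and only if ((x_i), x) ∈ L*_X. -/

import Mathlib

/-!
For finite `A`, interpolation (obtained from two applications of Rudin's lemma) shows that
`{z | A ≪_d z}` is open. So a net converging to `x` is eventually in `↑A` for every
`A ∈ fin_d(x)`, and `fin_d(x)` witnesses quasi-liminf convergence of every subnet; the Lawson-open
sets `(↑y)ᶜ` force every eventual lower bound `y` below `x`. Conversely, an `L*`-convergent net
is eventually in every open neighbourhood of `x` through the finite sets converging to `x`, and if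
it were frequently in `↑y` with `y ⋢ x`, the subnet inside `↑y` would have `y` as an eventual
lower bound.
-/

namespace Conv

variable {X : Type}

/-- A directed preorder (index of a net), given as an explicit relation. -/
def DirIdx {I : Type} (r : I → I → Prop) : Prop :=
  Nonempty I ∧ (∀ i, r i i) ∧ (∀ a b c : I, r a b → r b c → r a c) ∧
    ∀ a b : I, ∃ c, r a c ∧ r b c

/-- Specialization order relative to a family `T` of "open" sets. -/
def sle (T : Set (Set X)) (x y : X) : Prop := ∀ U ∈ T, x ∈ U → y ∈ U

/-- Upper closure of a set w.r.t. the specialization order of `T`. -/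
def upset (T : Set (Set X)) (A : Set X) : Set X := {z | ∃ a ∈ A, sle T a z}

/-- `D` is a (nonempty) directed subset w.r.t. the specialization order of `T`. -/
def IsDirSet (T : Set (Set X)) (D : Set X) : Prop := D.Nonempty ∧ DirectedOn (sle T) D

/-- A subset `D` (viewed as a monotone net) converges to `x` w.r.t. `T`. -/
def DConv (T : Set (Set X)) (D : Set X) (x : X) : Prop :=
  ∀ U ∈ T, x ∈ U → (D ∩ U).Nonempty

/-- `U` is directed-open w.r.t. `T`. -/
def DirOpen (T : Set (Set X)) (U : Set X) : Prop :=
  ∀ D x, IsDirSet T D → DConv T D x → x ∈ U → (D ∩ U).Nonempty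

/-- The family of directed-open sets. -/
def DTop (T : Set (Set X)) : Set (Set X) := {U | DirOpen T U}

/-- The family of open sets of a topological space. -/
def opens (X : Type) [TopologicalSpace X] : Set (Set X) := {U | IsOpen U}

/-- Every directed-open set belongs to `T`. -/
def DirT (T : Set (Set X)) : Prop := ∀ U, DirOpen T U → U ∈ T

/-- A directed space: every directed-open set is open. -/
def IsDirectedSpace (X : Type) [TopologicalSpace X] : Prop := DirT (opens X)

/-- A net is eventually in `U`. -/
def EvIn {I : Type} (r : I → I → Prop) (xi : I → X) (U : Set X) : Prop :=
  ∃ k, ∀ i, r k i → xi i ∈ U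

/-- `y` is an eventual lower bound of the net `xi`. -/
def EvLB (T : Set (Set X)) {I : Type} (r : I → I → Prop) (xi : I → X) (y : X) : Prop :=
  ∃ k, ∀ i, r k i → sle T y (xi i)

/-- Topological convergence of a net w.r.t. the family `T` of open sets. -/
def NConv (T : Set (Set X)) {I : Type} (r : I → I → Prop) (xi : I → X) (x : X) : Prop :=
  ∀ U ∈ T, x ∈ U → EvIn r xi U

/-- `((x_i), x) ∈ S_X`: some directed set of eventual lower bounds converges to `x`. -/
def SConv (T : Set (Set X)) {I : Type} (r : I → I → Prop) (xi : I → X) (x : X) : Prop :=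
  ∃ D : Set X, IsDirSet T D ∧ (∀ d ∈ D, EvLB T r xi d) ∧ DConv T D x

/-- `U` is open in the topology determined by `S_X`. -/
def SOpen (T : Set (Set X)) (U : Set X) : Prop :=
  ∀ (I : Type) (r : I → I → Prop), DirIdx r → ∀ (xi : I → X) (x : X),
    SConv T r xi x → x ∈ U → EvIn r xi U

/-- `y ≪_d x`. -/
def WayBelow (T : Set (Set X)) (y x : X) : Prop :=
  ∀ D : Set X, IsDirSet T D → DConv T D x → ∃ d ∈ D, sle T y d

/-- A continuous space (relative to the family `T`). -/
def IsContinuousT (T : Set (Set X)) : Prop :=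
  DirT T ∧ ∀ x : X, IsDirSet T {y | WayBelow T y x} ∧ DConv T {y | WayBelow T y x} x

def IsContinuousSpace (X : Type) [TopologicalSpace X] : Prop := IsContinuousT (opens X)

/-- `G ≪_d H` for subsets. -/
def SWayBelow (T : Set (Set X)) (G H : Set X) : Prop :=
  ∀ (D : Set X) (x : X), IsDirSet T D → DConv T D x → x ∈ H → (D ∩ upset T G).Nonempty

/-- A directed family of finite sets (ordered by reverse inclusion of upper closures). -/
def IsDirFam (T : Set (Set X)) (F : Set (Set X)) : Prop :=
  F.Nonempty ∧ (∀ A ∈ F, A.Finite) ∧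
    ∀ A ∈ F, ∀ B ∈ F, ∃ C ∈ F, upset T C ⊆ upset T A ∧ upset T C ⊆ upset T B

/-- Convergence of a family of finite sets to `x`. -/
def FamConv (T : Set (Set X)) (F : Set (Set X)) (x : X) : Prop :=
  ∀ U ∈ T, x ∈ U → ∃ A ∈ F, upset T A ⊆ U

/-- `fin_d(x)`. -/
def finD (T : Set (Set X)) (x : X) : Set (Set X) := {A | A.Finite ∧ SWayBelow T A {x}}

def IsQuasicontinuousT (T : Set (Set X)) : Prop :=
  DirT T ∧ ∀ x : X, IsDirFam T (finD T x) ∧ FamConv T (finD T x) x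

def IsQuasicontinuousSpace (X : Type) [TopologicalSpace X] : Prop :=
  IsQuasicontinuousT (opens X)

/-- `A` is a quasi eventual lower bound of the net `xi`. -/
def QEvLB (T : Set (Set X)) {I : Type} (r : I → I → Prop) (xi : I → X) (A : Set X) : Prop :=
  A.Finite ∧ ∃ k, ∀ i, r k i → xi i ∈ upset T A

/-- `((x_i), x) ∈ S*_X`. -/
def QSConv (T : Set (Set X)) {I : Type} (r : I → I → Prop) (xi : I → X) (x : X) : Prop :=
  ∃ F : Set (Set X), IsDirFam T F ∧ (∀ A ∈ F, QEvLB T r xi A) ∧ FamConv T F x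

/-- `U` is open in the topology determined by `S*_X`. -/
def QSOpen (T : Set (Set X)) (U : Set X) : Prop :=
  ∀ (I : Type) (r : I → I → Prop), DirIdx r → ∀ (xi : I → X) (x : X),
    QSConv T r xi x → x ∈ U → EvIn r xi U

/-- `x ≡ liminf x_i`. -/
def IsLiminf (T : Set (Set X)) {I : Type} (r : I → I → Prop) (xi : I → X) (x : X) : Prop :=
  (∀ y, EvLB T r xi y → sle T y x) ∧
  (∀ z, (∀ y, EvLB T r xi y → sle T y z) → sle T x z) ∧
  SConv T r xi x

/-- `f : (J,s) → (I,r)` is a subnet map: monotone and cofinal, with directed domain. -/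
def Subnet {I J : Type} (r : I → I → Prop) (s : J → J → Prop) (f : J → I) : Prop :=
  DirIdx s ∧ (∀ a b, s a b → r (f a) (f b)) ∧ ∀ i, ∃ j, r i (f j)

/-- `z` is a cofinal lower bound of the net `xi`. -/
def CofLB (T : Set (Set X)) {I : Type} (r : I → I → Prop) (xi : I → X) (z : X) : Prop :=
  ∀ i, ∃ j, r i j ∧ sle T z (xi j)

/-- `((x_i), x) ∈ L_X`: every subnet has liminf `x`. -/
def LConv (T : Set (Set X)) {I : Type} (r : I → I → Prop) (xi : I → X) (x : X) : Prop :=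
  ∀ (J : Type) (s : J → J → Prop) (f : J → I), Subnet r s f →
    IsLiminf T s (fun j => xi (f j)) x

/-- `U` is open in the liminf topology `L(X)`. -/
def LOpen (T : Set (Set X)) (U : Set X) : Prop :=
  ∀ (I : Type) (r : I → I → Prop), DirIdx r → ∀ (xi : I → X) (x : X),
    LConv T r xi x → x ∈ U → EvIn r xi U

/-- `x ≡_q liminf x_i`. -/
def QLiminf (T : Set (Set X)) {I : Type} (r : I → I → Prop) (xi : I → X) (x : X) : Prop :=
  QSConv T r xi x ∧ ∀ y, EvLB T r xi y → sle T y x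

/-- `((x_i), x) ∈ L*_X`: every subnet quasi-liminf converges to `x`. -/
def QLConv (T : Set (Set X)) {I : Type} (r : I → I → Prop) (xi : I → X) (x : X) : Prop :=
  ∀ (J : Type) (s : J → J → Prop) (f : J → I), Subnet r s f →
    QLiminf T s (fun j => xi (f j)) x

/-- `U` is open in the quasi-liminf topology `L*(X)`. -/
def QLOpen (T : Set (Set X)) (U : Set X) : Prop :=
  ∀ (I : Type) (r : I → I → Prop), DirIdx r → ∀ (xi : I → X) (x : X),
    QLConv T r xi x → x ∈ U → EvIn r xi U

/-- The Lawson topology: generated by the opens of `X` and complements of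
principal upper sets. -/
def lawson (X : Type) [TopologicalSpace X] : Set (Set X) :=
  {U | (TopologicalSpace.generateFrom
      (opens X ∪ {V | ∃ y : X, V = {z : X | sle (opens X) y z}ᶜ})).IsOpen U}


section Specialization

variable {T : Set (Set X)}

lemma sle_refl (x : X) : sle T x x := fun _ _ h => h

lemma sle_trans {x y z : X} (hxy : sle T x y) (hyz : sle T y z) : sle T x z :=
  fun U hU hx => hyz U hU (hxy U hU hx)

def IsUpper (T : Set (Set X)) (V : Set X) : Prop := ∀ ⦃a b : X⦄, a ∈ V → sle T a b → b ∈ V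

lemma isUpper_upset (A : Set X) : IsUpper T (upset T A) := by
  rintro a b ⟨c, hc, hca⟩ hab
  exact ⟨c, hc, sle_trans hca hab⟩

lemma isUpper_setOf_sle (y : X) : IsUpper T {z | sle T y z} :=
  fun _ _ hya hab => sle_trans hya hab

lemma mem_upset_of_mem {A : Set X} {a : X} (ha : a ∈ A) : a ∈ upset T A :=
  ⟨a, ha, sle_refl a⟩

lemma upset_sdiff_subset_upset_sdiff {B C V : Set X} (h : upset T C ⊆ upset T B)
    (hV : IsUpper T V) : upset T (C \ V) ⊆ upset T (B \ V) := by
  rintro z ⟨c, ⟨hcC, hcV⟩, hcz⟩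
  obtain ⟨b, hbB, hbc⟩ := h (mem_upset_of_mem hcC)
  exact ⟨b, ⟨hbB, fun hbV => hcV (hV hbV hbc)⟩, sle_trans hbc hcz⟩

end Specialization

lemma nonempty_sInter_inter_of_isChain {S : Set X} (hS : S.Finite) {c : Set (Set X)}
    (hc : IsChain (· ⊆ ·) c) (hne : c.Nonempty) (h : ∀ M ∈ c, (M ∩ S).Nonempty) :
    (⋂₀ c ∩ S).Nonempty := by
  have hfin : ((· ∩ S) '' c).Finite :=
    hS.finite_subsets.subset (Set.image_subset_iff.2 fun _ _ => Set.inter_subset_right)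
  obtain ⟨_, ⟨M₀, hM₀, rfl⟩, hmin⟩ := hfin.exists_minimal (hne.image _)
  have hM₀_le : ∀ M ∈ c, M₀ ∩ S ⊆ M ∩ S := by
    intro M hM
    rcases hc.total hM₀ hM with hle | hle
    · exact Set.inter_subset_inter_left S hle
    · exact hmin ⟨M, hM, rfl⟩ (Set.inter_subset_inter_left S hle)
  obtain ⟨a, ha⟩ := h M₀ hM₀
  exact ⟨a, fun M hM => (hM₀_le M hM ha).1, ha.2⟩


section Rudin

variable {T : Set (Set X)} {A : Set (Set X)}

def IsLower (T : Set (Set X)) (M : Set X) : Prop := ∀ ⦃a b : X⦄, a ∈ M → sle T b a → b ∈ M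

/-- A minimal candidate is the directed set of Rudin's lemma. -/
def RudinCandidate (T : Set (Set X)) (A : Set (Set X)) : Set (Set X) :=
  {M | M ⊆ {m | ∃ S ∈ A, ∃ u ∈ S, sle T m u} ∧ IsLower T M ∧ ∀ S ∈ A, (M ∩ S).Nonempty}

lemma sInter_mem_rudinCandidate {c : Set (Set X)} (hA : ∀ S ∈ A, S.Finite)
    (hc : c ⊆ RudinCandidate T A) (hchain : IsChain (· ⊆ ·) c) (hne : c.Nonempty) :
    ⋂₀ c ∈ RudinCandidate T A := by
  obtain ⟨M, hM⟩ := hne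
  refine ⟨(Set.sInter_subset_of_mem hM).trans (hc hM).1, ?_, ?_⟩
  · exact fun a b ha hba N hN => (hc hN).2.1 (ha N hN) hba
  · exact fun S hS => nonempty_sInter_inter_of_isChain (hA S hS) hchain ⟨M, hM⟩
      fun N hN => (hc hN).2.2 S hS

lemma exists_minimal_rudinCandidate (hA : ∀ S ∈ A, S.Finite ∧ S.Nonempty) :
    ∃ M, Minimal (· ∈ RudinCandidate T A) M := by
  have hmem : {m | ∃ S ∈ A, ∃ u ∈ S, sle T m u} ∈ RudinCandidate T A := by
    refine ⟨subset_rfl, ?_, fun S hS => ?_⟩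
    · rintro a b ⟨S, hS, u, hu, hau⟩ hba
      exact ⟨S, hS, u, hu, sle_trans hba hau⟩
    · obtain ⟨s, hs⟩ := (hA S hS).2
      exact ⟨s, ⟨S, hS, s, hs, sle_refl s⟩, hs⟩
  obtain ⟨M, -, hM⟩ := zorn_superset_nonempty _ (fun c hc hchain hne =>
    ⟨⋂₀ c, sInter_mem_rudinCandidate (fun S hS => (hA S hS).1) hc hchain hne,
      fun _ => Set.sInter_subset_of_mem⟩) _ hmem
  exact ⟨M, hM⟩

/-- Removing an upper set `U` from a minimal candidate leaves no candidate, so some member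
of `A` meets `M` only inside `U`. -/
lemma exists_inter_subset_of_minimal_rudinCandidate {M U : Set X}
    (hM : Minimal (· ∈ RudinCandidate T A) M) (hU : IsUpper T U) (hMU : (M ∩ U).Nonempty) :
    ∃ S ∈ A, M ∩ S ⊆ U := by
  by_contra! hcon
  have hdiff : M \ U ∈ RudinCandidate T A := by
    refine ⟨Set.sdiff_subset.trans hM.prop.1, ?_, fun S hS => ?_⟩
    · rintro a b ⟨haM, haU⟩ hba
      exact ⟨hM.prop.2.1 haM hba, fun hbU => haU (hU hbU hba)⟩
    · obtain ⟨s, ⟨hsM, hsS⟩, hsU⟩ := Set.not_subset.1 (hcon S hS)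
      exact ⟨s, ⟨hsM, hsU⟩, hsS⟩
  obtain ⟨m, hmM, hmU⟩ := hMU
  exact (hM.eq_of_subset hdiff Set.sdiff_subset ▸ hmM).2 hmU

lemma directedOn_of_minimal_rudinCandidate {M : Set X} (hA : IsDirFam T A)
    (hM : Minimal (· ∈ RudinCandidate T A) M) : DirectedOn (sle T) M := by
  intro a ha b hb
  obtain ⟨S₁, hS₁, hS₁a⟩ := exists_inter_subset_of_minimal_rudinCandidate hM
    (isUpper_setOf_sle a) ⟨a, ha, sle_refl a⟩
  obtain ⟨S₂, hS₂, hS₂b⟩ := exists_inter_subset_of_minimal_rudinCandidate hM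
    (isUpper_setOf_sle b) ⟨b, hb, sle_refl b⟩
  obtain ⟨S₃, hS₃, hsub₁, hsub₂⟩ := hA.2.2 S₁ hS₁ S₂ hS₂
  obtain ⟨m, hmM, hmS₃⟩ := hM.prop.2.2 S₃ hS₃
  obtain ⟨s₁, hs₁, hs₁m⟩ := hsub₁ (mem_upset_of_mem hmS₃)
  obtain ⟨s₂, hs₂, hs₂m⟩ := hsub₂ (mem_upset_of_mem hmS₃)
  exact ⟨m, hmM, sle_trans (hS₁a ⟨hM.prop.2.1 hmM hs₁m, hs₁⟩) hs₁m,
    sle_trans (hS₂b ⟨hM.prop.2.1 hmM hs₂m, hs₂⟩) hs₂m⟩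

lemma rudin (hA : IsDirFam T A) (hne : ∀ S ∈ A, S.Nonempty) :
    ∃ D : Set X, IsDirSet T D ∧ (∀ d ∈ D, ∃ S ∈ A, ∃ u ∈ S, sle T d u) ∧
      ∀ S ∈ A, (D ∩ upset T S).Nonempty := by
  obtain ⟨M, hM⟩ := exists_minimal_rudinCandidate (T := T) fun S hS => ⟨hA.2.1 S hS, hne S hS⟩
  obtain ⟨S₀, hS₀⟩ := hA.1
  refine ⟨M, ⟨(hM.prop.2.2 S₀ hS₀).mono Set.inter_subset_left,
    directedOn_of_minimal_rudinCandidate hA hM⟩, hM.prop.1, fun S hS => ?_⟩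
  obtain ⟨m, hmM, hmS⟩ := hM.prop.2.2 S hS
  exact ⟨m, hmM, mem_upset_of_mem hmS⟩

end Rudin

section WayBelow

variable {T : Set (Set X)}

lemma isDirSet_singleton (z : X) : IsDirSet T {z} :=
  ⟨⟨z, rfl⟩, fun a ha b hb => ⟨z, rfl, ha ▸ sle_refl a, hb ▸ sle_refl b⟩⟩

lemma dConv_of_sle {D : Set X} {a b : X} (hab : sle T a b) (hD : DConv T D b) : DConv T D a :=
  fun U hU haU => hD U hU (hab U hU haU)

lemma mem_upset_of_sWayBelow {A : Set X} {z : X} (h : SWayBelow T A {z}) : z ∈ upset T A := by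
  obtain ⟨d, hd, hdA⟩ := h {z} z (isDirSet_singleton z) (fun U _ hzU => ⟨z, rfl, hzU⟩) rfl
  exact hd ▸ hdA

lemma isUpper_setOf_sWayBelow (A : Set X) : IsUpper T {z | SWayBelow T A {z}} := by
  intro a b ha hab D y hD hDy hy
  exact ha D a hD (dConv_of_sle hab (hy ▸ hDy)) rfl

lemma exists_isDirSet_of_not_sWayBelow {A : Set X} {z : X} (h : ¬ SWayBelow T A {z}) :
    ∃ D, IsDirSet T D ∧ DConv T D z ∧ ∀ d ∈ D, d ∉ upset T A := by
  simp only [SWayBelow, not_forall, Set.not_nonempty_iff_eq_empty] at h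
  obtain ⟨D, y, hD, hDy, hy, hempty⟩ := h
  exact ⟨D, hD, hy ▸ hDy, fun d hd hdA => hempty.subset ⟨hd, hdA⟩⟩

/-- Rudin's lemma applied to the sets `C \ Z` with `C ∈ fin_d(d)`, `d ∈ D`: these form a
directed family converging to `x`. -/
lemma exists_isDirSet_dConv_avoiding (hq : IsQuasicontinuousT T) {D Z : Set X} {x : X}
    (hD : IsDirSet T D) (hDx : DConv T D x) (hZ : IsUpper T Z)
    (hDZ : ∀ d ∈ D, ∀ C ∈ finD T d, ∃ c ∈ C, c ∉ Z) :
    ∃ E, IsDirSet T E ∧ DConv T E x ∧ ∀ e ∈ E, e ∉ Z := by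
  set F : Set (Set X) := {S | ∃ d ∈ D, ∃ C ∈ finD T d, S = C \ Z}
  have hF : IsDirFam T F := by
    refine ⟨?_, ?_, ?_⟩
    · obtain ⟨d, hd⟩ := hD.1
      obtain ⟨C, hC⟩ := (hq.2 d).1.1
      exact ⟨C \ Z, d, hd, C, hC, rfl⟩
    · rintro S ⟨d, -, C, hC, rfl⟩
      exact hC.1.sdiff
    · rintro S₁ ⟨d₁, hd₁, C₁, hC₁, rfl⟩ S₂ ⟨d₂, hd₂, C₂, hC₂, rfl⟩
      obtain ⟨d, hd, hd₁d, hd₂d⟩ := hD.2 d₁ hd₁ d₂ hd₂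
      obtain ⟨C, hC, hsub₁, hsub₂⟩ := (hq.2 d).1.2.2 C₁
        ⟨hC₁.1, isUpper_setOf_sWayBelow C₁ hC₁.2 hd₁d⟩ C₂
        ⟨hC₂.1, isUpper_setOf_sWayBelow C₂ hC₂.2 hd₂d⟩
      exact ⟨C \ Z, ⟨d, hd, C, hC, rfl⟩, upset_sdiff_subset_upset_sdiff hsub₁ hZ,
        upset_sdiff_subset_upset_sdiff hsub₂ hZ⟩
  obtain ⟨E, hE, hEF, hFE⟩ := rudin hF (by
    rintro S ⟨d, hd, C, hC, rfl⟩
    obtain ⟨c, hcC, hcZ⟩ := hDZ d hd C hC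
    exact ⟨c, hcC, hcZ⟩)
  refine ⟨E, hE, fun U hU hxU => ?_, fun e he heZ => ?_⟩
  · obtain ⟨d, hdD, hdU⟩ := hDx U hU hxU
    obtain ⟨C, hC, hCU⟩ := (hq.2 d).2 U hU hdU
    obtain ⟨e, heE, c, hc, hce⟩ := hFE (C \ Z) ⟨d, hdD, C, hC, rfl⟩
    exact ⟨e, heE, hce U hU (hCU (mem_upset_of_mem hc.1))⟩
  · obtain ⟨_, ⟨d, -, C, -, rfl⟩, u, hu, heu⟩ := hEF e he
    exact hu.2 (hZ heZ heu)

/-- Otherwise Rudin's lemma yields a directed set converging to `x` on which `A ≪ ·` fails, and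
from it a second one avoiding `↑A`, contradicting `A ≪ x`. -/
lemma exists_finite_sWayBelow_interpolant (hq : IsQuasicontinuousT T) {x : X} {A : Set X}
    (hA : SWayBelow T A {x}) :
    ∃ B, B.Finite ∧ SWayBelow T B {x} ∧ ∀ b ∈ B, SWayBelow T A {b} := by
  by_contra! hno
  obtain ⟨D, hD, hDx, hDA⟩ := exists_isDirSet_dConv_avoiding hq (isDirSet_singleton x)
    (fun U _ hxU => ⟨x, rfl, hxU⟩) (isUpper_setOf_sWayBelow A)
    (fun _ hd B hB => hno B hB.1 (Set.mem_singleton_iff.1 hd ▸ hB.2))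
  obtain ⟨E, hE, hEx, hEA⟩ := exists_isDirSet_dConv_avoiding hq hD hDx (isUpper_upset A)
    fun d hd C hC => by
      obtain ⟨D', hD', hD'd, hD'A⟩ := exists_isDirSet_of_not_sWayBelow (hDA d hd)
      obtain ⟨w, hw, c, hc, hcw⟩ := hC.2 D' d hD' hD'd rfl
      exact ⟨c, hc, fun hcA => hD'A w hw (isUpper_upset A hcA hcw)⟩
  obtain ⟨e, he, heA⟩ := hA E x hE hEx rfl
  exact hEA e he heA

lemma setOf_sWayBelow_mem (hq : IsQuasicontinuousT T) (A : Set X) :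
    {z | SWayBelow T A {z}} ∈ T := by
  refine hq.1 _ fun D z hD hDz hz => ?_
  obtain ⟨B, -, hBz, hAB⟩ := exists_finite_sWayBelow_interpolant hq hz
  obtain ⟨d, hd, b, hb, hbd⟩ := hBz D z hD hDz rfl
  exact ⟨d, hd, isUpper_setOf_sWayBelow A (hAB b hb) hbd⟩

end WayBelow

section Nets

variable {T : Set (Set X)} {I : Type} {r : I → I → Prop} {xi : I → X} {x : X}

lemma subnet_id (hr : DirIdx r) : Subnet r r id :=
  ⟨hr, fun _ _ h => h, fun i => ⟨i, hr.2.1 i⟩⟩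

lemma subnet_subtype_val {P : I → Prop} (hr : DirIdx r) (hP : ∀ i, ∃ j, r i j ∧ P j) :
    Subnet r (fun a b : {i // P i} => r a b) Subtype.val := by
  obtain ⟨i₀⟩ := hr.1
  refine ⟨⟨?_, fun a => hr.2.1 a, fun a b c => hr.2.2.1 a b c, fun a b => ?_⟩,
    fun _ _ h => h, fun i => ?_⟩
  · obtain ⟨j, -, hj⟩ := hP i₀
    exact ⟨⟨j, hj⟩⟩
  · obtain ⟨c, hac, hbc⟩ := hr.2.2.2 a b
    obtain ⟨j, hcj, hj⟩ := hP c
    exact ⟨⟨j, hj⟩, hr.2.2.1 _ _ _ hac hcj, hr.2.2.1 _ _ _ hbc hcj⟩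
  · obtain ⟨j, hij, hj⟩ := hP i
    exact ⟨⟨j, hj⟩, hij⟩

lemma nConv_comp_subnet {J : Type} {s : J → J → Prop} {f : J → I} (hr : DirIdx r)
    (h : NConv T r xi x) (hf : Subnet r s f) : NConv T s (fun j => xi (f j)) x := by
  intro U hU hxU
  obtain ⟨k, hk⟩ := h U hU hxU
  obtain ⟨j₀, hj₀⟩ := hf.2.2 k
  exact ⟨j₀, fun j hj => hk _ (hr.2.2.1 _ _ _ hj₀ (hf.2.1 _ _ hj))⟩

lemma nConv_mono {T' : Set (Set X)} (hTT' : T ⊆ T') (h : NConv T' r xi x) : NConv T r xi x :=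
  fun U hU => h U (hTT' hU)

lemma nConv_generateFrom {S : Set (Set X)} (hr : DirIdx r)
    (h : ∀ V ∈ S, x ∈ V → EvIn r xi V) :
    NConv {U | (TopologicalSpace.generateFrom S).IsOpen U} r xi x := by
  intro U hU
  induction hU with
  | basic V hV => exact h V hV
  | univ =>
    obtain ⟨i₀⟩ := hr.1
    exact fun _ => ⟨i₀, fun _ _ => trivial⟩
  | inter U V _ _ ihU ihV =>
    rintro ⟨hxU, hxV⟩
    obtain ⟨k₁, hk₁⟩ := ihU hxU
    obtain ⟨k₂, hk₂⟩ := ihV hxV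
    obtain ⟨k, hk₁k, hk₂k⟩ := hr.2.2.2 k₁ k₂
    exact ⟨k, fun i hi => ⟨hk₁ i (hr.2.2.1 _ _ _ hk₁k hi), hk₂ i (hr.2.2.1 _ _ _ hk₂k hi)⟩⟩
  | sUnion S _ ih =>
    rintro ⟨V, hVS, hxV⟩
    obtain ⟨k, hk⟩ := ih V hVS hxV
    exact ⟨k, fun i hi => ⟨V, hVS, hk i hi⟩⟩

lemma qsConv_of_nConv (hq : IsQuasicontinuousT T) (h : NConv T r xi x) : QSConv T r xi x := by
  refine ⟨finD T x, (hq.2 x).1, fun A hA => ⟨hA.1, ?_⟩, (hq.2 x).2⟩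
  obtain ⟨k, hk⟩ := h _ (setOf_sWayBelow_mem hq A) hA.2
  exact ⟨k, fun i hi => mem_upset_of_sWayBelow (hk i hi)⟩

lemma evIn_of_qsConv {U : Set X} (h : QSConv T r xi x) (hU : U ∈ T) (hxU : x ∈ U) :
    EvIn r xi U := by
  obtain ⟨F, -, hFlb, hFx⟩ := h
  obtain ⟨A, hA, hAU⟩ := hFx U hU hxU
  obtain ⟨-, k, hk⟩ := hFlb A hA
  exact ⟨k, fun i hi => hAU (hk i hi)⟩

/-- If the net were frequently in `↑y`, the subnet of those indices would have `y` as an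
eventual lower bound. -/
lemma evIn_compl_of_qlConv (hr : DirIdx r) (h : QLConv T r xi x) {y : X}
    (hyx : ¬ sle T y x) : EvIn r xi {z | sle T y z}ᶜ := by
  by_contra hev
  simp only [EvIn, Set.mem_compl_iff, Set.mem_ofPred_eq, not_exists, not_forall,
    not_not, exists_prop] at hev
  have hsub := subnet_subtype_val hr hev
  obtain ⟨j⟩ := hsub.1.1
  exact hyx ((h _ _ _ hsub).2 y ⟨j, fun j' _ => j'.2⟩)

end Nets

section Lawson

variable [TopologicalSpace X] {I : Type} {r : I → I → Prop} {xi : I → X} {x : X}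

lemma opens_subset_lawson : opens X ⊆ lawson X :=
  fun U hU => TopologicalSpace.GenerateOpen.basic U (Or.inl hU)

lemma compl_setOf_sle_mem_lawson (y : X) : {z | sle (opens X) y z}ᶜ ∈ lawson X :=
  TopologicalSpace.GenerateOpen.basic _ (Or.inr ⟨y, rfl⟩)

lemma sle_of_evLB_of_nConv_lawson (hr : DirIdx r) (h : NConv (lawson X) r xi x) {y : X}
    (hy : EvLB (opens X) r xi y) : sle (opens X) y x := by
  by_contra hyx
  obtain ⟨k, hk⟩ := hy
  obtain ⟨k', hk'⟩ := h _ (compl_setOf_sle_mem_lawson y) hyx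
  obtain ⟨i, hki, hk'i⟩ := hr.2.2.2 k k'
  exact hk' i hk'i (hk i hki)

lemma qlConv_of_nConv_lawson (hX : IsQuasicontinuousSpace X) (hr : DirIdx r)
    (h : NConv (lawson X) r xi x) : QLConv (opens X) r xi x := by
  intro J s f hf
  have hsub := nConv_comp_subnet hr h hf
  exact ⟨qsConv_of_nConv hX (nConv_mono opens_subset_lawson hsub),
    fun y => sle_of_evLB_of_nConv_lawson hf.1 hsub⟩

lemma nConv_lawson_of_qlConv (hr : DirIdx r) (h : QLConv (opens X) r xi x) :
    NConv (lawson X) r xi x := by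
  refine nConv_generateFrom hr ?_
  rintro V (hV | ⟨y, rfl⟩) hxV
  · exact evIn_of_qsConv (h I r id (subnet_id hr)).1 hV hxV
  · exact evIn_compl_of_qlConv hr h hxV

end Lawson

theorem stmt19_general (X : Type) [TopologicalSpace X]
    (h : IsQuasicontinuousSpace X) :
    ∀ (I : Type) (r : I → I → Prop), DirIdx r → ∀ (xi : I → X) (x : X),
      NConv (lawson X) r xi x ↔ QLConv (opens X) r xi x :=
  fun _ _ hr _ _ => ⟨qlConv_of_nConv_lawson h hr, nConv_lawson_of_qlConv hr⟩

theorem stmt19 (X : Type) [TopologicalSpace X] [T0Space X]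
    (h : IsQuasicontinuousSpace X) :
    ∀ (I : Type) (r : I → I → Prop), DirIdx r → ∀ (xi : I → X) (x : X),
      NConv (lawson X) r xi x ↔ QLConv (opens X) r xi x :=
  stmt19_general X h

end Conv
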